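/- arXiv:1501.05998 — 2 statements merged into one kernel-verified Lean document; each statement's English description precedes it below -/
import Mathlib

section
/- For all real numbers x and y and every natural number n: ∑_{k=0}^{n} binom(x+k, k) · binom(y+n-k, n-k) = binom(x+y+n+1, n). -/
/-!
Upper negation `C(r + k, k) = (-1)^k C(-r - 1, k)` turns every summand into `(-1)^n` times a
summand of the Chu–Vandermonde convolution `∑ C(-r - 1, k) C(-s - 1, n - k) = C(-r - s - 2, n)`,
and upper negation once more reads the right-hand side as `(-1)^n C(r + s + n + 1, n)`. Since
`binom` is `Ring.choose` on `ℝ`, the identity holds in every commutative binomial ring.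
-/

/-- The generalized binomial coefficient `binom(x,k) = x(x-1)⋯(x-k+1)/k!`. -/
noncomputable def binom (x : ℝ) (k : ℕ) : ℝ :=
  (∏ i ∈ Finset.range k, (x - i)) / (Nat.factorial k)

open Finset Polynomial

theorem binom_eq_ringChoose (x : ℝ) (k : ℕ) : binom x k = Ring.choose x k := by
  have h := Ring.descPochhammer_eq_factorial_smul_choose x k
  rw [← aeval_eq_smeval, aeval_def, eval₂_eq_eval_map, descPochhammer_map,
    descPochhammer_eval_eq_prod_range, nsmul_eq_mul] at h
  rw [binom, h, mul_div_cancel_left₀ _ (Nat.cast_ne_zero.mpr k.factorial_ne_zero)]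

namespace Ring

variable {R : Type*} [CommRing R] [BinomialRing R]

theorem choose_add_natCast_self (r : R) (k : ℕ) :
    choose (r + k) k = (-1) ^ k * choose (-(r + 1)) k := by
  rw [choose_neg, add_right_comm, add_sub_cancel_right, Units.smul_def,
    Int.coe_negOnePow_natCast, zsmul_eq_mul]
  push_cast
  simp [← mul_assoc, ← mul_pow]

theorem sum_choose_add_natCast_mul_choose_add_natCast (r s : R) (n : ℕ) :
    ∑ k ∈ range (n + 1), choose (r + k) k * choose (s + ↑(n - k)) (n - k) =
      choose (r + s + n + 1) n := by
  have upper_negation : ∀ k ∈ range (n + 1),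
      choose (r + k) k * choose (s + ↑(n - k)) (n - k) =
        (-1) ^ n * (choose (-(r + 1)) k * choose (-(s + 1)) (n - k)) := by
    intro k hk
    rw [choose_add_natCast_self, choose_add_natCast_self,
      ← pow_mul_pow_sub (-1 : R) (Nat.lt_succ_iff.mp (mem_range.mp hk))]
    ring
  calc ∑ k ∈ range (n + 1), choose (r + k) k * choose (s + ↑(n - k)) (n - k)
      = (-1) ^ n * choose (-(r + 1) + -(s + 1)) n := by
        rw [sum_congr rfl upper_negation, ← mul_sum, add_choose_eq n (Commute.all _ _),
          Nat.sum_antidiagonal_eq_sum_range_succ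
            (fun i j => choose (-(r + 1)) i * choose (-(s + 1)) j)]
    _ = choose (r + s + 1 + n) n := by
        rw [choose_add_natCast_self, show -(r + 1) + -(s + 1) = -(r + s + 1 + 1) by ring]
    _ = choose (r + s + n + 1) n := by rw [add_right_comm]

end Ring

/-- Gould's identity: `∑_{k=0}^{n} binom(x+k, k) · binom(y+n-k, n-k) = binom(x+y+n+1, n)`. -/
theorem gould_identity (x y : ℝ) (n : ℕ) :
    ∑ k ∈ Finset.range (n + 1), binom (x + k) k * binom (y + ((n - k : ℕ) : ℝ)) (n - k) =
      binom (x + y + n + 1) n := by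
  simp only [binom_eq_ringChoose]
  exact Ring.sum_choose_add_natCast_mul_choose_add_natCast x y n
end

section
/- Let A = (a_0, a_1, a_2) be a zero-sum vector of complex numbers, and let n be a non-negative integer whose base-3 expansion does not contain the digit 2. Then ∑_{k ⪯ n} a_{u_3(k)} = (-1)^{w(n)} · a_{u_3(2n)}, where the sum is over all non-negative integers k digitally dominated by n in base 3. -/
/-- `dig b n i` is the `i`-th digit of `n` in base `b`. -/
def dig (b n i : ℕ) : ℕ := n / b ^ i % b

/-- `u3 n` is the sum of the base-`3` digits of `n`, reduced modulo `3`. -/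
def u3 (n : ℕ) : Fin 3 := ⟨(Nat.digits 3 n).sum % 3, Nat.mod_lt _ (by norm_num)⟩

/-- `w n` is the sum of the base-`3` digits of `n`, reduced modulo `2`. -/
def w (n : ℕ) : ℕ := (Nat.digits 3 n).sum % 2

/-! Write `n = 3m + d` with `d ∈ {0, 1}`. The numbers dominated by `n` are exactly the `3q + r`
with `q ⪯ m` and `r ≤ d`, and `u₃(3q + r) = u₃(q) + r`. For `d = 0` the sum is the same sum
for `m`. For `d = 1` the zero-sum condition gives `a_j + a_{j+1} = -a_{j+2}`, so the sum is minus
the sum for `m` of the rotated zero-sum vector `j ↦ a_{j+2}`. By induction the sign is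
`(-1)^{s(n)}` for the base-3 digit sum `s(n)`, and each digit `1` of `n` contributes a rotation
by `2`, matching the digit `2` it becomes in `2n`. -/

open Finset Nat

section Dominance

variable {b : ℕ}

lemma dig_zero (b n : ℕ) : dig b n 0 = n % b := by
  simp [dig]

lemma dig_succ (b n i : ℕ) : dig b n (i + 1) = dig b (n / b) i := by
  simp [dig, pow_succ, Nat.div_div_eq_div_mul, mul_comm]

lemma forall_dig_le_iff (k n : ℕ) :
    (∀ i, dig b k i ≤ dig b n i) ↔
      k % b ≤ n % b ∧ ∀ i, dig b (k / b) i ≤ dig b (n / b) i := by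
  simp only [← dig_zero, ← dig_succ]
  exact ⟨fun h => ⟨h 0, fun i => h (i + 1)⟩, fun ⟨h0, hs⟩ i => i.casesOn h0 hs⟩

lemma le_of_forall_dig_le (hb : 1 < b) {k n : ℕ} (h : ∀ i, dig b k i ≤ dig b n i) :
    k ≤ n := by
  induction k using Nat.strong_induction_on generalizing n with
  | _ k ih =>
    obtain rfl | hk := Nat.eq_zero_or_pos k
    · exact Nat.zero_le n
    obtain ⟨hmod, hdiv⟩ := (forall_dig_le_iff k n).1 h
    have hquot : k / b ≤ n / b := ih _ (Nat.div_lt_self hk hb) hdiv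
    calc k = b * (k / b) + k % b := (Nat.div_add_mod k b).symm
      _ ≤ b * (n / b) + n % b := by gcongr
      _ = n := Nat.div_add_mod n b

open Classical in
noncomputable def dominated (b n : ℕ) : Finset ℕ :=
  (range (n + 1)).filter fun k => ∀ i, dig b k i ≤ dig b n i

lemma mem_dominated (hb : 1 < b) {k n : ℕ} :
    k ∈ dominated b n ↔ ∀ i, dig b k i ≤ dig b n i := by
  simp only [dominated, mem_filter, mem_range, and_iff_right_iff_imp]
  exact fun h => Nat.lt_succ_of_le (le_of_forall_dig_le hb h)

lemma dominated_zero (b : ℕ) : dominated b 0 = {0} := by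
  ext k
  simp only [dominated, zero_add, mem_filter, mem_range, Nat.lt_one_iff, mem_singleton]
  exact ⟨And.left, fun hk => ⟨hk, fun i => by rw [hk]⟩⟩

lemma dominated_mul_add (hb : 1 < b) {d : ℕ} (hd : d < b) (m : ℕ) :
    dominated b (b * m + d) =
      (dominated b m ×ˢ range (d + 1)).image fun p => b * p.1 + p.2 := by
  have hmod : (b * m + d) % b = d := by rw [Nat.mul_add_mod, Nat.mod_eq_of_lt hd]
  have hdiv : (b * m + d) / b = m := by
    rw [Nat.mul_add_div (by omega), Nat.div_eq_of_lt hd, add_zero]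
  ext k
  simp only [mem_dominated hb, forall_dig_le_iff k, hmod, hdiv, mem_image, mem_product,
    mem_range, Prod.exists]
  constructor
  · rintro ⟨hr, hq⟩
    exact ⟨k / b, k % b, ⟨hq, Nat.lt_succ_of_le hr⟩, Nat.div_add_mod k b⟩
  · rintro ⟨q, r, ⟨hq, hr⟩, rfl⟩
    have hrb : r < b := by omega
    rw [Nat.mul_add_mod, Nat.mod_eq_of_lt hrb, Nat.mul_add_div (by omega), Nat.div_eq_of_lt hrb,
      add_zero]
    exact ⟨Nat.le_of_lt_succ hr, hq⟩

lemma sum_dominated_mul_add {M : Type*} [AddCommMonoid M] (hb : 1 < b) {d : ℕ} (hd : d < b)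
    (m : ℕ) (f : ℕ → M) :
    ∑ k ∈ dominated b (b * m + d), f k =
      ∑ q ∈ dominated b m, ∑ r ∈ range (d + 1), f (b * q + r) := by
  rw [dominated_mul_add hb hd, sum_image, sum_product]
  rintro ⟨q, r⟩ hqr ⟨q', r'⟩ hqr' heq
  simp only [coe_product, Set.mem_prod, mem_coe, mem_range] at hqr hqr'
  have hr : r = r' := by
    simpa [Nat.mul_add_mod, Nat.mod_eq_of_lt (by omega : r < b),
      Nat.mod_eq_of_lt (by omega : r' < b)] using congrArg (· % b) heq
  subst hr
  simp_all [show b ≠ 0 by omega]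

end Dominance

lemma Nat.digits_sum_mul_add {b : ℕ} (hb : 1 < b) {r : ℕ} (hr : r < b) (q : ℕ) :
    (digits b (b * q + r)).sum = (digits b q).sum + r := by
  by_cases hrq : r = 0 ∧ q = 0
  · simp [hrq]
  · rw [add_comm, digits_add b hb r q hr (not_and_or.1 hrq), List.sum_cons, add_comm]

lemma u3_three_mul_add (q : ℕ) {r : ℕ} (hr : r < 3) : u3 (3 * q + r) = u3 q + ⟨r, hr⟩ := by
  ext
  simp only [u3, Fin.val_add, digits_sum_mul_add (by norm_num) hr, Nat.mod_add_mod]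

lemma u3_three_mul (q : ℕ) : u3 (3 * q) = u3 q := by
  simpa using u3_three_mul_add q (r := 0) (by norm_num)

section ZeroSum

variable {R : Type*} [Ring R] {a : Fin 3 → R}

lemma add_add_one_eq_neg_add_two (ha : a 0 + a 1 + a 2 = 0) (j : Fin 3) :
    a j + a (j + 1) = -a (j + 2) := by
  rw [eq_neg_iff_add_eq_zero, ← ha]
  fin_cases j <;> simp <;> abel

lemma zero_sum_comp_add_right (ha : a 0 + a 1 + a 2 = 0) (c : Fin 3) :
    a (0 + c) + a (1 + c) + a (2 + c) = 0 := by
  rw [← ha]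
  fin_cases c <;> simp <;> abel

theorem sum_dominated_three (n : ℕ) (hn : ∀ i, dig 3 n i ≠ 2) (a : Fin 3 → R)
    (ha : a 0 + a 1 + a 2 = 0) :
    ∑ k ∈ dominated 3 n, a (u3 k) = (-1) ^ (digits 3 n).sum * a (u3 (2 * n)) := by
  induction n using Nat.strong_induction_on generalizing a with
  | _ n ih =>
    obtain rfl | hpos := Nat.eq_zero_or_pos n
    · simp [dominated_zero]
    obtain ⟨m, d, hd, rfl⟩ : ∃ m d, d < 2 ∧ n = 3 * m + d := by
      have := hn 0
      rw [dig_zero] at this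
      exact ⟨n / 3, n % 3, by omega, (Nat.div_add_mod n 3).symm⟩
    have hm : ∀ i, dig 3 m i ≠ 2 := fun i => by
      simpa [dig_succ, show (3 * m + d) / 3 = m by omega] using hn (i + 1)
    have ihm := ih m (by omega) hm
    rw [sum_dominated_mul_add (by norm_num) (by omega),
      digits_sum_mul_add (by norm_num) (by omega),
      show 2 * (3 * m + d) = 3 * (2 * m) + 2 * d by ring]
    interval_cases d
    · simpa [u3_three_mul] using ihm a ha
    · have hrot := ihm (fun j => a (j + 2)) (zero_sum_comp_add_right ha 2)
      simp only [sum_range_succ, range_one, sum_singleton, add_zero, mul_one, u3_three_mul,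
        u3_three_mul_add _ (show 1 < 3 by norm_num), u3_three_mul_add _ (show 2 < 3 by norm_num),
        Fin.reduceFinMk, add_add_one_eq_neg_add_two ha, sum_neg_distrib]
      rw [hrot, pow_succ, mul_neg_one, neg_mul]

end ZeroSum

open Classical in
/-- Let `A = (a_0, a_1, a_2)` be a zero-sum vector of complex numbers and let `n` be a
non-negative integer whose base-3 expansion does not contain the digit `2`. Then
`∑_{k ⪯ n} a_{u_3(k)} = (-1)^{w(n)} · a_{u_3(2n)}`, the sum over all `k` digitally dominated
by `n` in base 3. -/
theorem ptm_coefficient_base_three (a : Fin 3 → ℂ) (ha : a 0 + a 1 + a 2 = 0)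
    (n : ℕ) (hn : ∀ i, dig 3 n i ≠ 2) :
    ∑ k ∈ (Finset.range (n + 1)).filter (fun k => ∀ i, dig 3 k i ≤ dig 3 n i), a (u3 k) =
      (-1 : ℂ) ^ w n * a (u3 (2 * n)) := by
  rw [w, ← neg_one_pow_eq_pow_mod_two]
  exact sum_dominated_three n hn a ha
end
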